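/- For a three-block Gaussian forward Gibbs sampler, the noise covariance S = Σ − BΣBᵀ factors as S = M_L·M_Lᵀ with the block lower-triangular matrix M_L = [[Q₁₁^{-1/2}, 0, 0], [A₂₁Q₁₁^{-1/2}, Q₂₂^{-1/2}, 0], [(A₃₁ + A₃₂A₂₁)Q₁₁^{-1/2}, A₃₂Q₂₂^{-1/2}, Q₃₃^{-1/2}]], and for any x, y ∈ ℝ^d the solution z = (z₁, z₂, z₃) of the triangular linear system M_L·z = B(x − y) is given explicitly by z₁ = Q₁₁^{1/2}·( A₁₂(x₂ − y₂) + A₁₃(x₃ − y₃) ), z₂ = Q₂₂^{1/2}·A₂₃(x₃ − y₃), and z₃ = 0. (Hence the reflection vector of the joint maximal reflection coupling can be computed by a triangular solve at block-wise cost.) -/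

import Mathlib

open Matrix
open scoped Classical

noncomputable section

/-- The positive semidefinite square root of a positive semidefinite matrix (removed from
Mathlib; restored here with its former definition). -/
noncomputable def Matrix.PosSemidef.sqrt {n 𝕜 : Type*} [Fintype n] [RCLike 𝕜] [PartialOrder 𝕜]
    [DecidableEq n] {A : Matrix n n 𝕜} (hA : Matrix.PosSemidef A) : Matrix n n 𝕜 :=
  hA.1.eigenvectorUnitary.1 * Matrix.diagonal ((↑) ∘ (Real.sqrt ∘ hA.1.eigenvalues)) *
  (star hA.1.eigenvectorUnitary : Matrix n n 𝕜)

/-!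
A forward Gibbs sweep is the Gauss–Seidel iteration of the splitting `Q = M - N` with
`M = D + Kᵀ` (block lower part of `Q`, diagonal included) and `N = -K`, `K` the strict block
upper part; then `1 - L = D⁻¹ M`, `U = D⁻¹ N` and `B = M⁻¹ N`. Since `M = Q + N` and `Q` is
symmetric, `M Q⁻¹ Mᵀ - N Q⁻¹ Nᵀ = M + Nᵀ = D`, so that
`Q⁻¹ - B Q⁻¹ Bᵀ = M⁻¹ D M⁻ᵀ = (1 - L)⁻¹ D⁻¹ (1 - L)⁻ᵀ`.
Writing `D⁻¹ = R Rᵀ` with `R = blockdiag (Q₁₁^{-1/2}, Q₂₂^{-1/2}, Q₃₃^{-1/2})` and inverting the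
unit lower triangular `1 - L` block by block gives `M_L = (1 - L)⁻¹ R`.
Then `M_L z = B (x - y)` reduces to `R z = U (x - y)`, and the right side has vanishing last
block because `U` is strictly upper triangular.
-/

namespace Matrix

section Sqrt

variable {n : Type*} [Fintype n] [DecidableEq n] {A : Matrix n n ℝ}

theorem PosSemidef.sqrt_mul_self (hA : A.PosSemidef) : hA.sqrt * hA.sqrt = A := by
  have hsqrt : hA.sqrt = Unitary.conjStarAlgAut ℝ (Matrix n n ℝ) hA.1.eigenvectorUnitary
      (diagonal (Real.sqrt ∘ hA.1.eigenvalues)) := rfl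
  rw [hsqrt, ← map_mul, diagonal_mul_diagonal]
  conv_rhs => rw [hA.1.spectral_theorem]
  congr 2
  ext i
  simp [Real.mul_self_sqrt (hA.eigenvalues_nonneg i)]

theorem PosSemidef.sqrt_transpose (hA : A.PosSemidef) : hA.sqrtᵀ = hA.sqrt := by
  simp [PosSemidef.sqrt, transpose_mul, star_eq_conjTranspose, Matrix.mul_assoc]

theorem PosSemidef.sqrt_inv_mul_transpose (hA : A.PosSemidef) :
    hA.sqrt⁻¹ * hA.sqrt⁻¹ᵀ = A⁻¹ := by
  rw [transpose_nonsing_inv, hA.sqrt_transpose, ← mul_inv_rev, hA.sqrt_mul_self]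

theorem PosDef.isUnit_det_sqrt (hA : A.PosDef) : IsUnit hA.posSemidef.sqrt.det := by
  refine isUnit_iff_ne_zero.mpr fun h => hA.det_pos.ne' ?_
  rw [← hA.posSemidef.sqrt_mul_self, det_mul, h, zero_mul]

end Sqrt

section Splitting

variable {n R : Type*} [Fintype n] [DecidableEq n] [CommRing R]

theorem inv_sub_conj_of_splitting {Q M N : Matrix n n R} (hQ : Qᵀ = Q)
    (hQu : IsUnit Q.det) (hMu : IsUnit M.det) (hsplit : Q = M - N) :
    Q⁻¹ - (M⁻¹ * N) * Q⁻¹ * (M⁻¹ * N)ᵀ = M⁻¹ * (M + Nᵀ) * M⁻¹ᵀ := by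
  have hM : M = Q + N := by rw [hsplit, sub_add_cancel]
  have hMM : M⁻¹ * M = 1 := nonsing_inv_mul M hMu
  have hMMt : Mᵀ * M⁻¹ᵀ = 1 := by rw [← transpose_mul, hMM, transpose_one]
  have key : M * Q⁻¹ * Mᵀ - N * Q⁻¹ * Nᵀ = M + Nᵀ := by
    rw [hM, transpose_add, hQ]
    simp only [add_mul, mul_add, mul_nonsing_inv Q hQu, Matrix.one_mul, Matrix.mul_assoc,
      nonsing_inv_mul Q hQu, Matrix.mul_one]
    abel
  calc Q⁻¹ - (M⁻¹ * N) * Q⁻¹ * (M⁻¹ * N)ᵀ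
      = (M⁻¹ * M) * Q⁻¹ * (Mᵀ * M⁻¹ᵀ) - M⁻¹ * (N * Q⁻¹ * Nᵀ) * M⁻¹ᵀ := by
        rw [hMM, hMMt, transpose_mul]
        simp only [Matrix.one_mul, Matrix.mul_one, Matrix.mul_assoc]
    _ = M⁻¹ * (M * Q⁻¹ * Mᵀ - N * Q⁻¹ * Nᵀ) * M⁻¹ᵀ := by noncomm_ring
    _ = M⁻¹ * (M + Nᵀ) * M⁻¹ᵀ := by rw [key]

theorem inv_sub_conj_gaussSeidel {Q D K L U : Matrix n n R} (hQ : Qᵀ = Q)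
    (hQu : IsUnit Q.det) (hDu : IsUnit D.det) (hLu : IsUnit (1 - L).det)
    (hQDK : Q = D + Kᵀ + K) (hL : L = -(D⁻¹ * Kᵀ)) (hU : U = -(D⁻¹ * K)) :
    Q⁻¹ - ((1 - L)⁻¹ * U) * Q⁻¹ * ((1 - L)⁻¹ * U)ᵀ = (1 - L)⁻¹ * D⁻¹ * (1 - L)⁻¹ᵀ := by
  have hD : Dᵀ = D := by
    have hQt := congrArg transpose hQDK
    rw [hQ, transpose_add, transpose_add, transpose_transpose, hQDK] at hQt
    calc Dᵀ = Dᵀ + K + Kᵀ - K - Kᵀ := by abel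
      _ = D := by rw [← hQt]; abel
  have hM : D + Kᵀ = D * (1 - L) := by
    rw [hL, mul_sub, Matrix.mul_one, Matrix.mul_neg, mul_nonsing_inv_cancel_left D Kᵀ hDu,
      sub_neg_eq_add]
  have hMinv : (D + Kᵀ)⁻¹ = (1 - L)⁻¹ * D⁻¹ := by rw [hM, mul_inv_rev]
  have hMu : IsUnit (D + Kᵀ).det := by rw [hM, det_mul]; exact hDu.mul hLu
  have hB : (D + Kᵀ)⁻¹ * -K = (1 - L)⁻¹ * U := by
    rw [hMinv, hU, Matrix.mul_neg, Matrix.mul_neg, Matrix.mul_assoc]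
  have hMN : D + Kᵀ + (-K)ᵀ = D := by rw [transpose_neg, add_neg_cancel_right]
  have hcov := inv_sub_conj_of_splitting hQ hQu hMu (by rw [hQDK, sub_neg_eq_add])
  rw [hB, hMN, hMinv] at hcov
  rw [hcov, transpose_mul, transpose_nonsing_inv D, hD]
  simp only [Matrix.mul_assoc, nonsing_inv_mul_cancel_left D _ hDu]

end Splitting

section ThreeBlocks

variable {m₁ m₂ m₃ α : Type*}

def blockDiagonal₃ [Zero α] (X : Matrix m₁ m₁ α) (Y : Matrix m₂ m₂ α) (Z : Matrix m₃ m₃ α) :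
    Matrix (m₁ ⊕ m₂ ⊕ m₃) (m₁ ⊕ m₂ ⊕ m₃) α :=
  fromBlocks X 0 0 (fromBlocks Y 0 0 Z)

def blockStrictLower₃ [Zero α] (a : Matrix m₂ m₁ α) (b : Matrix m₃ m₁ α) (c : Matrix m₃ m₂ α) :
    Matrix (m₁ ⊕ m₂ ⊕ m₃) (m₁ ⊕ m₂ ⊕ m₃) α :=
  fromBlocks 0 0 (fromRows a b) (fromBlocks 0 0 c 0)

def blockStrictUpper₃ [Zero α] (a : Matrix m₁ m₂ α) (b : Matrix m₁ m₃ α) (c : Matrix m₂ m₃ α) :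
    Matrix (m₁ ⊕ m₂ ⊕ m₃) (m₁ ⊕ m₂ ⊕ m₃) α :=
  fromBlocks 0 (fromCols a b) 0 (fromBlocks 0 c 0 0)

theorem fromBlocks_eq_blockDiagonal₃_add [AddZeroClass α] (X : Matrix m₁ m₁ α)
    (Y : Matrix m₂ m₂ α) (Z : Matrix m₃ m₃ α) (a : Matrix m₁ m₂ α) (b : Matrix m₁ m₃ α)
    (c : Matrix m₂ m₃ α) (a' : Matrix m₂ m₁ α) (b' : Matrix m₃ m₁ α) (c' : Matrix m₃ m₂ α) :
    fromBlocks X (fromCols a b) (fromRows a' b') (fromBlocks Y c c' Z)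
      = blockDiagonal₃ X Y Z + blockStrictLower₃ a' b' c' + blockStrictUpper₃ a b c := by
  ext (i | i | i) (j | j | j) <;> simp [blockDiagonal₃, blockStrictLower₃, blockStrictUpper₃]

theorem neg_blockStrictLower₃ [NegZeroClass α] (a : Matrix m₂ m₁ α) (b : Matrix m₃ m₁ α)
    (c : Matrix m₃ m₂ α) : -blockStrictLower₃ a b c = blockStrictLower₃ (-a) (-b) (-c) := by
  ext (i | i | i) (j | j | j) <;> simp [blockStrictLower₃]

theorem neg_blockStrictUpper₃ [NegZeroClass α] (a : Matrix m₁ m₂ α) (b : Matrix m₁ m₃ α)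
    (c : Matrix m₂ m₃ α) : -blockStrictUpper₃ a b c = blockStrictUpper₃ (-a) (-b) (-c) := by
  ext (i | i | i) (j | j | j) <;> simp [blockStrictUpper₃]

theorem blockStrictUpper₃_transpose [Zero α] (a : Matrix m₁ m₂ α) (b : Matrix m₁ m₃ α)
    (c : Matrix m₂ m₃ α) : (blockStrictUpper₃ a b c)ᵀ = blockStrictLower₃ aᵀ bᵀ cᵀ := by
  ext (i | i | i) (j | j | j) <;> rfl

theorem blockDiagonal₃_transpose [Zero α] (X : Matrix m₁ m₁ α) (Y : Matrix m₂ m₂ α)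
    (Z : Matrix m₃ m₃ α) : (blockDiagonal₃ X Y Z)ᵀ = blockDiagonal₃ Xᵀ Yᵀ Zᵀ := by
  ext (i | i | i) (j | j | j) <;> rfl

variable [Fintype m₁] [Fintype m₂] [Fintype m₃]

theorem blockDiagonal₃_mul_blockDiagonal₃ [Semiring α] (X X' : Matrix m₁ m₁ α)
    (Y Y' : Matrix m₂ m₂ α) (Z Z' : Matrix m₃ m₃ α) :
    blockDiagonal₃ X Y Z * blockDiagonal₃ X' Y' Z'
      = blockDiagonal₃ (X * X') (Y * Y') (Z * Z') := by
  simp [blockDiagonal₃, fromBlocks_multiply]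

theorem blockDiagonal₃_mul_blockStrictLower₃ [Semiring α] (X : Matrix m₁ m₁ α)
    (Y : Matrix m₂ m₂ α) (Z : Matrix m₃ m₃ α) (a : Matrix m₂ m₁ α) (b : Matrix m₃ m₁ α)
    (c : Matrix m₃ m₂ α) :
    blockDiagonal₃ X Y Z * blockStrictLower₃ a b c
      = blockStrictLower₃ (Y * a) (Z * b) (Z * c) := by
  simp [blockDiagonal₃, blockStrictLower₃, fromBlocks_multiply, fromBlocks_mul_fromRows]

theorem blockDiagonal₃_mul_blockStrictUpper₃ [Semiring α] (X : Matrix m₁ m₁ α)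
    (Y : Matrix m₂ m₂ α) (Z : Matrix m₃ m₃ α) (a : Matrix m₁ m₂ α) (b : Matrix m₁ m₃ α)
    (c : Matrix m₂ m₃ α) :
    blockDiagonal₃ X Y Z * blockStrictUpper₃ a b c
      = blockStrictUpper₃ (X * a) (X * b) (Y * c) := by
  simp [blockDiagonal₃, blockStrictUpper₃, fromBlocks_multiply, mul_fromCols]

theorem blockDiagonal₃_mulVec_sumElim [NonUnitalNonAssocSemiring α] (X : Matrix m₁ m₁ α)
    (Y : Matrix m₂ m₂ α) (Z : Matrix m₃ m₃ α) (u : m₁ → α) (v : m₂ → α) (w : m₃ → α) :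
    blockDiagonal₃ X Y Z *ᵥ Sum.elim u (Sum.elim v w)
      = Sum.elim (X *ᵥ u) (Sum.elim (Y *ᵥ v) (Z *ᵥ w)) := by
  simp [blockDiagonal₃, fromBlocks_mulVec]

theorem blockStrictUpper₃_mulVec [Semiring α] (a : Matrix m₁ m₂ α) (b : Matrix m₁ m₃ α)
    (c : Matrix m₂ m₃ α) (x : m₁ ⊕ m₂ ⊕ m₃ → α) :
    blockStrictUpper₃ a b c *ᵥ x
      = Sum.elim
          (a *ᵥ (fun i => x (Sum.inr (Sum.inl i))) + b *ᵥ (fun i => x (Sum.inr (Sum.inr i))))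
          (Sum.elim (c *ᵥ (fun i => x (Sum.inr (Sum.inr i)))) 0) := by
  simp only [blockStrictUpper₃, fromBlocks_mulVec, fromCols_mulVec, zero_mulVec, add_zero,
    zero_add]
  rfl

variable [DecidableEq m₁] [DecidableEq m₂] [DecidableEq m₃]

theorem one_sub_blockStrictLower₃_mul_one_add [Ring α] (a : Matrix m₂ m₁ α)
    (b : Matrix m₃ m₁ α) (c : Matrix m₃ m₂ α) :
    (1 - blockStrictLower₃ a b c) * (1 + blockStrictLower₃ a (b + c * a) c) = 1 := by
  rw [sub_eq_add_neg, neg_blockStrictLower₃]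
  simp [blockStrictLower₃, ← fromBlocks_one, fromBlocks_add, fromBlocks_multiply,
    fromBlocks_mul_fromRows, ← fromRows_neg]

theorem one_add_blockStrictLower₃_mul_blockDiagonal₃ [Semiring α] (a : Matrix m₂ m₁ α)
    (b : Matrix m₃ m₁ α) (c : Matrix m₃ m₂ α) (X : Matrix m₁ m₁ α) (Y : Matrix m₂ m₂ α)
    (Z : Matrix m₃ m₃ α) :
    (1 + blockStrictLower₃ a b c) * blockDiagonal₃ X Y Z
      = fromBlocks X 0 (fromRows (a * X) (b * X)) (fromBlocks Y 0 (c * Y) Z) := by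
  simp [blockStrictLower₃, blockDiagonal₃, ← fromBlocks_one, fromBlocks_add,
    fromBlocks_multiply]

variable [CommRing α]

theorem inv_one_sub_blockStrictLower₃ (a : Matrix m₂ m₁ α) (b : Matrix m₃ m₁ α)
    (c : Matrix m₃ m₂ α) :
    (1 - blockStrictLower₃ a b c)⁻¹ = 1 + blockStrictLower₃ a (b + c * a) c :=
  inv_eq_right_inv (one_sub_blockStrictLower₃_mul_one_add a b c)

theorem blockDiagonal₃_mul_blockDiagonal₃_inv {X : Matrix m₁ m₁ α} {Y : Matrix m₂ m₂ α}
    {Z : Matrix m₃ m₃ α} (hX : IsUnit X.det) (hY : IsUnit Y.det) (hZ : IsUnit Z.det) :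
    blockDiagonal₃ X Y Z * blockDiagonal₃ X⁻¹ Y⁻¹ Z⁻¹ = 1 := by
  rw [blockDiagonal₃_mul_blockDiagonal₃, mul_nonsing_inv X hX, mul_nonsing_inv Y hY,
    mul_nonsing_inv Z hZ, blockDiagonal₃, fromBlocks_one, fromBlocks_one]

theorem inv_sub_conj_gaussSeidel₃ {Q : Matrix (m₁ ⊕ m₂ ⊕ m₃) (m₁ ⊕ m₂ ⊕ m₃) α}
    {Q₁₁ : Matrix m₁ m₁ α} {Q₁₂ : Matrix m₁ m₂ α} {Q₁₃ : Matrix m₁ m₃ α}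
    {Q₂₂ : Matrix m₂ m₂ α} {Q₂₃ : Matrix m₂ m₃ α} {Q₃₃ : Matrix m₃ m₃ α}
    (hQdef : Q = fromBlocks Q₁₁ (fromCols Q₁₂ Q₁₃) (fromRows Q₁₂ᵀ Q₁₃ᵀ)
      (fromBlocks Q₂₂ Q₂₃ Q₂₃ᵀ Q₃₃))
    (hQ : Qᵀ = Q) (hQu : IsUnit Q.det)
    (hu₁ : IsUnit Q₁₁.det) (hu₂ : IsUnit Q₂₂.det) (hu₃ : IsUnit Q₃₃.det)
    {A₁₂ : Matrix m₁ m₂ α} {A₁₃ : Matrix m₁ m₃ α} {A₂₁ : Matrix m₂ m₁ α}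
    {A₂₃ : Matrix m₂ m₃ α} {A₃₁ : Matrix m₃ m₁ α} {A₃₂ : Matrix m₃ m₂ α}
    (hA₁₂ : A₁₂ = -(Q₁₁⁻¹ * Q₁₂)) (hA₁₃ : A₁₃ = -(Q₁₁⁻¹ * Q₁₃))
    (hA₂₁ : A₂₁ = -(Q₂₂⁻¹ * Q₁₂ᵀ)) (hA₂₃ : A₂₃ = -(Q₂₂⁻¹ * Q₂₃))
    (hA₃₁ : A₃₁ = -(Q₃₃⁻¹ * Q₁₃ᵀ)) (hA₃₂ : A₃₂ = -(Q₃₃⁻¹ * Q₂₃ᵀ)) :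
    Q⁻¹ - ((1 - blockStrictLower₃ A₂₁ A₃₁ A₃₂)⁻¹ * blockStrictUpper₃ A₁₂ A₁₃ A₂₃) * Q⁻¹
        * ((1 - blockStrictLower₃ A₂₁ A₃₁ A₃₂)⁻¹ * blockStrictUpper₃ A₁₂ A₁₃ A₂₃)ᵀ
      = (1 - blockStrictLower₃ A₂₁ A₃₁ A₃₂)⁻¹ * blockDiagonal₃ Q₁₁⁻¹ Q₂₂⁻¹ Q₃₃⁻¹
        * (1 - blockStrictLower₃ A₂₁ A₃₁ A₃₂)⁻¹ᵀ := by
  have hDD := blockDiagonal₃_mul_blockDiagonal₃_inv hu₁ hu₂ hu₃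
  have hDinv := inv_eq_right_inv hDD
  rw [← hDinv]
  refine inv_sub_conj_gaussSeidel hQ hQu (isUnit_det_of_right_inverse hDD)
    (isUnit_det_of_right_inverse (one_sub_blockStrictLower₃_mul_one_add A₂₁ A₃₁ A₃₂))
    (K := blockStrictUpper₃ Q₁₂ Q₁₃ Q₂₃) ?_ ?_ ?_
  · rw [hQdef, fromBlocks_eq_blockDiagonal₃_add, blockStrictUpper₃_transpose]
  · rw [hDinv, blockStrictUpper₃_transpose, blockDiagonal₃_mul_blockStrictLower₃,
      neg_blockStrictLower₃, hA₂₁, hA₃₁, hA₃₂]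
  · rw [hDinv, blockDiagonal₃_mul_blockStrictUpper₃, neg_blockStrictUpper₃, hA₁₂, hA₁₃, hA₂₃]

end ThreeBlocks

end Matrix

/-- three-block Gaussian forward Gibbs: triangular factorization of the
noise covariance and explicit triangular solve for the reflection vector.
The noise covariance `S = Σ − BΣBᵀ` factors as `S = M_L M_Lᵀ` with the explicit block
lower-triangular `M_L`, and for any `x, y` the vector `z = (z₁, z₂, z₃)` with
`z₁ = Q₁₁^{1/2}(A₁₂(x₂−y₂) + A₁₃(x₃−y₃))`, `z₂ = Q₂₂^{1/2}A₂₃(x₃−y₃)`, `z₃ = 0`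
solves `M_L z = B(x − y)`. -/
theorem three_block_gibbs_noise_factorization_and_triangular_solve
    (n₁ n₂ n₃ : ℕ)
    (Q₁₁ : Matrix (Fin n₁) (Fin n₁) ℝ) (Q₁₂ : Matrix (Fin n₁) (Fin n₂) ℝ)
    (Q₁₃ : Matrix (Fin n₁) (Fin n₃) ℝ) (Q₂₂ : Matrix (Fin n₂) (Fin n₂) ℝ)
    (Q₂₃ : Matrix (Fin n₂) (Fin n₃) ℝ) (Q₃₃ : Matrix (Fin n₃) (Fin n₃) ℝ)
    (Q : Matrix (Fin n₁ ⊕ (Fin n₂ ⊕ Fin n₃)) (Fin n₁ ⊕ (Fin n₂ ⊕ Fin n₃)) ℝ)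
    (hQdef : Q = Matrix.fromBlocks Q₁₁ (Matrix.fromCols Q₁₂ Q₁₃)
        (Matrix.fromRows Q₁₂ᵀ Q₁₃ᵀ) (Matrix.fromBlocks Q₂₂ Q₂₃ Q₂₃ᵀ Q₃₃))
    (hQ : Q.PosDef)
    (h11 : Q₁₁.PosDef) (h22 : Q₂₂.PosDef) (h33 : Q₃₃.PosDef)
    (A₁₂ : Matrix (Fin n₁) (Fin n₂) ℝ) (hA12 : A₁₂ = -(Q₁₁⁻¹ * Q₁₂))
    (A₁₃ : Matrix (Fin n₁) (Fin n₃) ℝ) (hA13 : A₁₃ = -(Q₁₁⁻¹ * Q₁₃))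
    (A₂₁ : Matrix (Fin n₂) (Fin n₁) ℝ) (hA21 : A₂₁ = -(Q₂₂⁻¹ * Q₁₂ᵀ))
    (A₂₃ : Matrix (Fin n₂) (Fin n₃) ℝ) (hA23 : A₂₃ = -(Q₂₂⁻¹ * Q₂₃))
    (A₃₁ : Matrix (Fin n₃) (Fin n₁) ℝ) (hA31 : A₃₁ = -(Q₃₃⁻¹ * Q₁₃ᵀ))
    (A₃₂ : Matrix (Fin n₃) (Fin n₂) ℝ) (hA32 : A₃₂ = -(Q₃₃⁻¹ * Q₂₃ᵀ))
    (B : Matrix (Fin n₁ ⊕ (Fin n₂ ⊕ Fin n₃)) (Fin n₁ ⊕ (Fin n₂ ⊕ Fin n₃)) ℝ)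
    (hB : B = (1 - Matrix.fromBlocks 0 0 (Matrix.fromRows A₂₁ A₃₁)
          (Matrix.fromBlocks 0 0 A₃₂ 0))⁻¹
        * Matrix.fromBlocks 0 (Matrix.fromCols A₁₂ A₁₃) 0
          (Matrix.fromBlocks 0 A₂₃ 0 0))
    (ML : Matrix (Fin n₁ ⊕ (Fin n₂ ⊕ Fin n₃)) (Fin n₁ ⊕ (Fin n₂ ⊕ Fin n₃)) ℝ)
    (hML : ML = Matrix.fromBlocks (h11.posSemidef.sqrt)⁻¹ 0
        (Matrix.fromRows (A₂₁ * (h11.posSemidef.sqrt)⁻¹)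
          ((A₃₁ + A₃₂ * A₂₁) * (h11.posSemidef.sqrt)⁻¹))
        (Matrix.fromBlocks (h22.posSemidef.sqrt)⁻¹ 0
          (A₃₂ * (h22.posSemidef.sqrt)⁻¹) (h33.posSemidef.sqrt)⁻¹)) :
    Q⁻¹ - B * Q⁻¹ * Bᵀ = ML * MLᵀ
    ∧ ∀ x y : Fin n₁ ⊕ (Fin n₂ ⊕ Fin n₃) → ℝ,
        ML.mulVec
          (Sum.elim
            (h11.posSemidef.sqrt.mulVec
              (A₁₂.mulVec (fun i => (x - y) (Sum.inr (Sum.inl i)))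
                + A₁₃.mulVec (fun i => (x - y) (Sum.inr (Sum.inr i)))))
            (Sum.elim
              (h22.posSemidef.sqrt.mulVec
                (A₂₃.mulVec (fun i => (x - y) (Sum.inr (Sum.inr i)))))
              0))
        = B.mulVec (x - y) := by
  have hu₁ : IsUnit Q₁₁.det := (isUnit_iff_isUnit_det _).mp h11.isUnit
  have hu₂ : IsUnit Q₂₂.det := (isUnit_iff_isUnit_det _).mp h22.isUnit
  have hu₃ : IsUnit Q₃₃.det := (isUnit_iff_isUnit_det _).mp h33.isUnit
  set R₁ := h11.posSemidef.sqrt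
  set R₂ := h22.posSemidef.sqrt
  set R₃ := h33.posSemidef.sqrt
  set N := 1 + blockStrictLower₃ A₂₁ (A₃₁ + A₃₂ * A₂₁) A₃₂
  set Rinv := blockDiagonal₃ R₁⁻¹ R₂⁻¹ R₃⁻¹
  have hN : (1 - blockStrictLower₃ A₂₁ A₃₁ A₃₂)⁻¹ = N := inv_one_sub_blockStrictLower₃ _ _ _
  have hBN : B = N * blockStrictUpper₃ A₁₂ A₁₃ A₂₃ := by rw [← hN]; exact hB
  have hcov := inv_sub_conj_gaussSeidel₃ hQdef (isHermitian_iff_isSymm.mp hQ.isHermitian)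
    ((isUnit_iff_isUnit_det _).mp hQ.isUnit) hu₁ hu₂ hu₃ hA12 hA13 hA21 hA23 hA31 hA32
  rw [hN, ← hBN] at hcov
  have hDRR : blockDiagonal₃ Q₁₁⁻¹ Q₂₂⁻¹ Q₃₃⁻¹ = Rinv * Rinvᵀ := by
    rw [blockDiagonal₃_transpose, blockDiagonal₃_mul_blockDiagonal₃,
      h11.posSemidef.sqrt_inv_mul_transpose, h22.posSemidef.sqrt_inv_mul_transpose,
      h33.posSemidef.sqrt_inv_mul_transpose]
  have hMLN : ML = N * Rinv := by rw [hML, one_add_blockStrictLower₃_mul_blockDiagonal₃]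
  refine ⟨?_, fun x y => ?_⟩
  · rw [hcov, hDRR, hMLN, transpose_mul]
    simp only [Matrix.mul_assoc]
  · rw [hMLN, hBN, ← mulVec_mulVec, ← mulVec_mulVec, blockDiagonal₃_mulVec_sumElim,
      blockStrictUpper₃_mulVec, mulVec_mulVec, mulVec_mulVec,
      nonsing_inv_mul R₁ h11.isUnit_det_sqrt, nonsing_inv_mul R₂ h22.isUnit_det_sqrt,
      one_mulVec, one_mulVec, mulVec_zero]

end
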